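/- (Combined bi-level error bound.) Under the assumptions that the per-state reward error satisfies ‖R^Θ − R̂^Θ‖_∞ ≤ γ(δ_g+δ_c)V_max‖μ₀‖_∞/(1−γ) + 2Δ‖μ₀‖_∞ V_max, the TV distance of upper-level kernels is at most Δ, and ‖W^Θ_{Q̂}‖_∞ ≤ W_max = R_max/(1−λ), the higher-order value functions satisfy ‖W_Q^Θ − W_{Q̂}^Θ‖_∞ ≤ γ(δ_g+δ_c)V_max‖μ₀‖_∞/((1−γ)(1−λ)) + (2Δ‖μ₀‖_∞ V_max + 2λΔ W_max)/(1−λ). -/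
import Mathlib


/-- Combined bi-level error bound: with per-state reward error at most
`γ(δ_g+δ_c)V_max‖μ₀‖_∞/(1-γ) + 2Δ‖μ₀‖_∞V_max`, upper-level kernels `Δ`-close
in total variation, and `‖Ŵ‖_∞ ≤ W_max = R_max/(1-λ)`, the fixed points
satisfy `‖W_Q^Θ - W_Q̂^Θ‖_∞ ≤ γ(δ_g+δ_c)V_max‖μ₀‖_∞/((1-γ)(1-λ))
+ (2Δ‖μ₀‖_∞V_max + 2λΔW_max)/(1-λ)`, where `V_max = r_max/(1-γ)`. -/
theorem stmt14 {P B : Type*} [Fintype P] [Fintype B] [Nonempty P]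
    (γ lam δg δc Δ rmax Rmax μnorm : ℝ)
    (hγ0 : 0 ≤ γ) (hγ1 : γ < 1) (hlam0 : 0 ≤ lam) (hlam1 : lam < 1)
    (hδg : 0 ≤ δg) (hδc : 0 ≤ δc) (hΔ : 0 ≤ Δ)
    (hrmax : 0 ≤ rmax) (hRmax : 0 ≤ Rmax) (hμ : 0 ≤ μnorm)
    (Θ : P → B) (R Rhat : P → B → ℝ)
    (Q Qhat : P → B → P → ℝ)
    (hQ : ∀ p b p', 0 ≤ Q p b p') (hQ1 : ∀ p b, ∑ p', Q p b p' = 1)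
    (hQhat : ∀ p b p', 0 ≤ Qhat p b p') (hQhat1 : ∀ p b, ∑ p', Qhat p b p' = 1)
    (W What : P → ℝ)
    (hW : ∀ p, W p = R p (Θ p) + lam * ∑ p', Q p (Θ p) p' * W p')
    (hWhat : ∀ p, What p = Rhat p (Θ p) + lam * ∑ p', Qhat p (Θ p) p' * What p')
    (hR : ∀ p, |R p (Θ p) - Rhat p (Θ p)| ≤
      γ * (δg + δc) * (rmax / (1 - γ)) * μnorm / (1 - γ)
        + 2 * Δ * μnorm * (rmax / (1 - γ)))
    (hTV : ∀ p b, (∑ p', |Q p b p' - Qhat p b p'|) / 2 ≤ Δ)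
    (hWb : ∀ p, |What p| ≤ Rmax / (1 - lam)) :
    ∀ p, |W p - What p| ≤
      γ * (δg + δc) * (rmax / (1 - γ)) * μnorm / ((1 - γ) * (1 - lam))
        + (2 * Δ * μnorm * (rmax / (1 - γ))
            + 2 * lam * Δ * (Rmax / (1 - lam))) / (1 - lam) := by
  have h1γ : (0:ℝ) < 1 - γ := by linarith
  have h1l : (0:ℝ) < 1 - lam := by linarith
  set Vmax : ℝ := rmax / (1 - γ) with hVm
  set Wmax : ℝ := Rmax / (1 - lam) with hWm
  have hWmax0 : 0 ≤ Wmax := div_nonneg hRmax h1l.le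
  set ε : ℝ := γ * (δg + δc) * Vmax * μnorm / (1 - γ) + 2 * Δ * μnorm * Vmax with hε
  set C : ℝ := ε + 2 * lam * Δ * Wmax with hC
  set M : ℝ := Finset.univ.sup' Finset.univ_nonempty (fun p => |W p - What p|) with hM
  have hMle : ∀ p, |W p - What p| ≤ M := by
    intro p; rw [hM]
    exact Finset.le_sup' (fun q => |W q - What q|) (Finset.mem_univ p)
  have hM0 : 0 ≤ M := le_trans (abs_nonneg _) (hMle (Classical.arbitrary P))
  have key : ∀ p, |W p - What p| ≤ C + lam * M := by
    intro p
    have h2 : ∑ p', (Q p (Θ p) p' - Qhat p (Θ p) p') * What p'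
        + ∑ p', Q p (Θ p) p' * (W p' - What p')
        = ∑ p', Q p (Θ p) p' * W p' - ∑ p', Qhat p (Θ p) p' * What p' := by
      rw [← Finset.sum_add_distrib, ← Finset.sum_sub_distrib]
      exact Finset.sum_congr rfl (fun x _ => by ring)
    have e : W p - What p = (R p (Θ p) - Rhat p (Θ p))
        + lam * (∑ p', (Q p (Θ p) p' - Qhat p (Θ p) p') * What p')
        + lam * (∑ p', Q p (Θ p) p' * (W p' - What p')) := by
      rw [hW p, hWhat p]
      linear_combination (-lam) * h2
    have b1 : |∑ p', (Q p (Θ p) p' - Qhat p (Θ p) p') * What p'| ≤ 2 * Δ * Wmax := by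
      calc |∑ p', (Q p (Θ p) p' - Qhat p (Θ p) p') * What p'|
          ≤ ∑ p', |(Q p (Θ p) p' - Qhat p (Θ p) p') * What p'| :=
            Finset.abs_sum_le_sum_abs _ _
        _ ≤ ∑ p', |Q p (Θ p) p' - Qhat p (Θ p) p'| * Wmax := by
            apply Finset.sum_le_sum; intro x _
            rw [abs_mul]
            exact mul_le_mul_of_nonneg_left (hWb x) (abs_nonneg _)
        _ = (∑ p', |Q p (Θ p) p' - Qhat p (Θ p) p'|) * Wmax := by
            rw [Finset.sum_mul]
        _ ≤ (2 * Δ) * Wmax := by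
            apply mul_le_mul_of_nonneg_right _ hWmax0
            have := hTV p (Θ p); linarith
        _ = 2 * Δ * Wmax := by ring
    have b2 : |∑ p', Q p (Θ p) p' * (W p' - What p')| ≤ M := by
      calc |∑ p', Q p (Θ p) p' * (W p' - What p')|
          ≤ ∑ p', |Q p (Θ p) p' * (W p' - What p')| :=
            Finset.abs_sum_le_sum_abs _ _
        _ ≤ ∑ p', Q p (Θ p) p' * M := by
            apply Finset.sum_le_sum; intro x _
            rw [abs_mul, abs_of_nonneg (hQ p (Θ p) x)]
            exact mul_le_mul_of_nonneg_left (hMle x) (hQ p (Θ p) x)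
        _ = M := by rw [← Finset.sum_mul, hQ1, one_mul]
    calc |W p - What p|
        ≤ |R p (Θ p) - Rhat p (Θ p)|
          + |lam * (∑ p', (Q p (Θ p) p' - Qhat p (Θ p) p') * What p')|
          + |lam * (∑ p', Q p (Θ p) p' * (W p' - What p'))| := by
          rw [e]; exact (abs_add_le _ _).trans (by gcongr; exact abs_add_le _ _)
      _ ≤ ε + lam * (2 * Δ * Wmax) + lam * M := by
          rw [abs_mul, abs_mul, abs_of_nonneg hlam0]
          exact add_le_add (add_le_add (hR p)
            (mul_le_mul_of_nonneg_left b1 hlam0))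
            (mul_le_mul_of_nonneg_left b2 hlam0)
      _ = C + lam * M := by ring
  obtain ⟨p₀, _, hp₀⟩ := Finset.exists_mem_eq_sup' (Finset.univ_nonempty (α := P))
    (fun p => |W p - What p|)
  have hMC : M ≤ C / (1 - lam) := by
    have hstep : M ≤ C + lam * M := by
      calc M = |W p₀ - What p₀| := hM.trans hp₀
        _ ≤ C + lam * M := key p₀
    rw [le_div_iff₀ h1l]; nlinarith
  intro p
  refine (hMle p).trans (hMC.trans (le_of_eq ?_))
  rw [hC, hε, hVm, hWm]
  field_simp
  ring
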